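/- For every integer K ≥ 1 and every even index j with 2 ≤ j ≤ 2K+2, the log-canonical bracket of the cluster parametrization satisfies {s_j, λ}_y = s_j λ, as an identity of rational functions of y on (ℂ*)^{2K}. -/

import Mathlib

noncomputable section

open Finset

/-- The space of cluster variables `(y_1, …, y_{2K})`; we use 1-based indexing, so the
vector has `2K+1` slots and slot `0` is a dummy unused coordinate. -/
abbrev YV (K : ℕ) := Fin (2*K+1) → ℂ

/-- Access `y_j` by its (1-based) natural-number index. -/
def yv (K : ℕ) (y : YV K) (j : ℕ) : ℂ := y ⟨j % (2*K+1), Nat.mod_lt _ (by omega)⟩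

/-- Partial derivative with respect to `y_i`. -/
def pY (K : ℕ) (i : Fin (2*K+1)) (f : YV K → ℂ) (y : YV K) : ℂ :=
  fderiv ℂ f y (Pi.single i 1)

/-- The log-canonical bracket
`{f, g}_y = (1/4) Σ_{i=1}^{2K−1} y_i y_{i+1} (∂f/∂y_i ∂g/∂y_{i+1} − ∂f/∂y_{i+1} ∂g/∂y_i)`. -/
def lcBr (K : ℕ) (f g : YV K → ℂ) (y : YV K) : ℂ :=
  (1/4 : ℂ) * ∑ i : Fin (2*K-1),
    yv K y ((i:ℕ)+1) * yv K y ((i:ℕ)+2) *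
      (pY K ⟨(i:ℕ)+1, by have := i.isLt; omega⟩ f y *
         pY K ⟨(i:ℕ)+2, by have := i.isLt; omega⟩ g y
       - pY K ⟨(i:ℕ)+2, by have := i.isLt; omega⟩ f y *
         pY K ⟨(i:ℕ)+1, by have := i.isLt; omega⟩ g y)

/-- `nestList [a₁, …, a_m] = 1 + a₁(1 + a₂(⋯(1 + a_m)⋯))`. -/
def nestList : List ℂ → ℂ
  | [] => 1
  | a :: t => 1 + a * nestList t

/-- The Stokes parameters `s_n`, `n = 1, …, 2K+2` (paper's 1-based indexing) of the
cluster parametrization: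
`s_1 = −y_1^{−2}`;
`s_{2k} = (1+y_{2k}²)·∏_{j=1}^{2k} y_j^{2(−1)^{j+1}}` for `k = 1, …, K`;
`s_{2k+1} = −(1+y_{2k+1}²)·∏_{j=1}^{2k+1} y_j^{2(−1)^{j}}` for `k = 1, …, K−1`;
`s_{2K+1} = −∏_{j=1}^{2K} y_j^{2(−1)^{j}}`;
`s_{2K+2} = y_1²·(1+y_2²(1+y_4²(⋯(1+y_{2K}²)⋯)))·∏_{j=1}^{K} y_{2j}^{−4}`. -/
def sY (K : ℕ) (n : ℕ) (y : YV K) : ℂ :=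
  if n = 1 then -(yv K y 1) ^ (-2 : ℤ)
  else if n = 2*K+1 then -∏ j ∈ range (2*K), (yv K y (j+1)) ^ ((-1:ℤ)^(j+1) * 2)
  else if n = 2*K+2 then
    (yv K y 1)^2 * nestList (List.ofFn fun k : Fin K => (yv K y (2*(k:ℕ)+2))^2)
      * ∏ j ∈ range K, (yv K y (2*(j+1))) ^ (-4 : ℤ)
  else if n % 2 = 0 then
    (1 + (yv K y n)^2) * ∏ j ∈ range n, (yv K y (j+1)) ^ ((-1:ℤ)^j * 2)
  else -((1 + (yv K y n)^2) * ∏ j ∈ range n, (yv K y (j+1)) ^ ((-1:ℤ)^(j+1) * 2))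

/-- `λ = ∏_{j=1}^K y_{2j}²`. -/
def lamY (K : ℕ) (y : YV K) : ℂ := ∏ j ∈ range K, (yv K y (2*(j+1)))^2

/-!
Since `λ = ∏ y_{2k}²`, one has `y_i ∂λ/∂y_i = 2λ` for even `i` and `∂λ/∂y_i = 0` for odd
`i`, so the `i`-th term of the log-canonical bracket `{f, λ}` is `2λ · y_i ∂f/∂y_i` for odd
`i` and `-2λ · y_{i+1} ∂f/∂y_{i+1}` for even `i`. The sum telescopes to
`{f, λ} = (λ/2) · y_1 ∂f/∂y_1`. Every even Stokes parameter is `y_1²` times a function of the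
other coordinates, hence `y_1 ∂s_j/∂y_1 = 2 s_j` by Euler's identity in the variable `y_1`.
-/

open Function

section HomogeneousCoordinate

variable {𝕜 ι : Type*} [NontriviallyNormedField 𝕜] [Fintype ι] [DecidableEq ι]
  {f : (ι → 𝕜) → 𝕜} {y : ι → 𝕜} {c : ι} {n : ℕ} {g : 𝕜}

theorem fderiv_single_eq_of_update_eq_pow_mul (hf : DifferentiableAt 𝕜 f y)
    (h : ∀ t, f (update y c t) = t ^ n * g) :
    fderiv 𝕜 f y (Pi.single c 1) = n * y c ^ (n - 1) * g := by
  have hline : HasDerivAt (fun t => f (update y c t)) (fderiv 𝕜 f y (Pi.single c 1)) (y c) :=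
    hf.hasFDerivAt.comp_hasDerivAt_of_eq (y c) (hasDerivAt_update y c (y c))
      (update_eq_self c y).symm
  refine hline.unique ?_
  simp only [h]
  exact (hasDerivAt_pow n (y c)).mul_const g

theorem mul_fderiv_single_eq_of_update_eq_pow_mul (hf : DifferentiableAt 𝕜 f y)
    (h : ∀ t, f (update y c t) = t ^ n * g) :
    y c * fderiv 𝕜 f y (Pi.single c 1) = n * f y := by
  rw [fderiv_single_eq_of_update_eq_pow_mul hf h, ← update_eq_self c y, h, update_eq_self]
  rcases n with _ | n
  · simp
  · simp only [Nat.add_sub_cancel]; ring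

end HomogeneousCoordinate

@[fun_prop]
theorem differentiableAt_finsetProd {𝕜 ι E 𝔸 : Type*} [NontriviallyNormedField 𝕜]
    [NormedAddCommGroup E] [NormedSpace 𝕜 E] [NormedCommRing 𝔸] [NormedAlgebra 𝕜 𝔸]
    {u : Finset ι} {f : ι → E → 𝔸} {x : E} (hf : ∀ i ∈ u, DifferentiableAt 𝕜 (f i) x) :
    DifferentiableAt 𝕜 (fun z => ∏ i ∈ u, f i z) x := by
  classical
  exact (HasFDerivAt.finsetProd fun i hi => (hf i hi).hasFDerivAt).differentiableAt

theorem differentiableAt_nestList_ofFn {E : Type*} [NormedAddCommGroup E] [NormedSpace ℂ E]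
    {n : ℕ} {F : Fin n → E → ℂ} {x : E} (hF : ∀ k, DifferentiableAt ℂ (F k) x) :
    DifferentiableAt ℂ (fun z => nestList (List.ofFn fun k => F k z)) x := by
  induction n with
  | zero => simp only [List.ofFn_zero, nestList]; fun_prop
  | succ n ih =>
    simp only [List.ofFn_succ, nestList]
    exact ((hF 0).mul (ih fun k => hF k.succ)).const_add 1

namespace ClusterCoordinates

variable {K : ℕ}

theorem yv_of_lt (y : YV K) {m : ℕ} (hm : m < 2*K+1) : yv K y m = y ⟨m, hm⟩ := by
  simp only [yv, Nat.mod_eq_of_lt hm]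

theorem yv_update_of_ne (y : YV K) {c : Fin (2*K+1)} {m : ℕ} (h : m % (2*K+1) ≠ c) (t : ℂ) :
    yv K (update y c t) m = yv K y m :=
  update_of_ne (Fin.ne_of_val_ne h) _ _

@[fun_prop]
theorem differentiable_yv (m : ℕ) : Differentiable ℂ (fun z : YV K => yv K z m) :=
  differentiable_apply _

theorem yv_ne_zero {y : YV K} (hy : ∀ i : Fin (2*K+1), (i:ℕ) ≠ 0 → y i ≠ 0) {m : ℕ}
    (hm1 : 1 ≤ m) (hm : m ≤ 2*K) : yv K y m ≠ 0 := by
  rw [yv_of_lt y (by omega)]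
  exact hy _ (by simp; omega)

theorem yv_update_one_self (y : YV K) (t : ℂ) : yv K (update y 1 t) 1 = t :=
  update_self ..

theorem yv_update_one_of_two_le (y : YV K) {m : ℕ} (hm2 : 2 ≤ m) (hm : m ≤ 2*K) (t : ℂ) :
    yv K (update y 1 t) m = yv K y m := by
  refine yv_update_of_ne y ?_ t
  rw [Nat.mod_eq_of_lt (by omega), Fin.val_one']
  have := Nat.mod_le 1 (2*K+1)
  omega

theorem differentiable_lamY : Differentiable ℂ (lamY K) := fun _ => by
  unfold lamY; fun_prop

theorem lamY_update_of_odd (y : YV K) {c : Fin (2*K+1)} (hc : Odd (c : ℕ)) (t : ℂ) :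
    lamY K (update y c t) = lamY K y :=
  prod_congr rfl fun j hj => by
    rw [yv_update_of_ne]
    rw [Nat.mod_eq_of_lt (by simp at hj; omega)]
    rintro h
    exact Nat.not_odd_iff_even.2 (even_two_mul _) (h ▸ hc)

theorem lamY_update_two_mul_succ (y : YV K) {k : ℕ} (hk : k < K) (t : ℂ) :
    lamY K (update y ⟨2*(k+1), by omega⟩ t)
      = t ^ 2 * ∏ j ∈ (range K).erase k, yv K y (2*(j+1)) ^ 2 := by
  rw [lamY, ← mul_prod_erase _ _ (mem_range.2 hk), yv_of_lt _ (by omega), update_self]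
  congr 1
  refine prod_congr rfl fun j hj => ?_
  rw [mem_erase, mem_range] at hj
  rw [yv_update_of_ne]
  rw [Nat.mod_eq_of_lt (by omega)]
  simp only [ne_eq]
  omega

theorem pY_lamY_of_odd (y : YV K) {c : Fin (2*K+1)} (hc : Odd (c : ℕ)) :
    pY K c (lamY K) y = 0 := by
  have := fderiv_single_eq_of_update_eq_pow_mul (n := 0) (differentiable_lamY y)
    fun t => by rw [lamY_update_of_odd y hc, pow_zero, one_mul]
  rw [pY, this]; simp

theorem mul_pY_lamY_of_even (y : YV K) {c : Fin (2*K+1)} (hc : Even (c : ℕ)) (hc0 : (c : ℕ) ≠ 0) :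
    y c * pY K c (lamY K) y = 2 * lamY K y := by
  obtain ⟨k, hk, rfl⟩ : ∃ k, ∃ hk : k < K, c = ⟨2*(k+1), by omega⟩ := by
    obtain ⟨c, hlt⟩ := c
    obtain ⟨r, rfl⟩ := hc
    exact ⟨r - 1, by simp at hc0; omega, by ext; simp at hc0 ⊢; omega⟩
  exact_mod_cast mul_fderiv_single_eq_of_update_eq_pow_mul (differentiable_lamY y)
    (lamY_update_two_mul_succ y hk)

theorem lcBr_lamY (hK : 1 ≤ K) (f : YV K → ℂ) (y : YV K) :
    lcBr K f (lamY K) y = lamY K y / 2 * (y 1 * pY K 1 f y) := by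
  let W : ℕ → ℂ := fun i =>
    if h : Even i ∧ i < 2*K then y ⟨i+1, by omega⟩ * pY K ⟨i+1, by omega⟩ f y else 0
  have hterm : ∀ i (hi : i < 2*K-1),
      yv K y (i+1) * yv K y (i+2) *
        (pY K ⟨i+1, by omega⟩ f y * pY K ⟨i+2, by omega⟩ (lamY K) y
          - pY K ⟨i+2, by omega⟩ f y * pY K ⟨i+1, by omega⟩ (lamY K) y)
        = 2 * lamY K y * (W i - W (i+1)) := by
    intro i hi
    rw [yv_of_lt y (by omega : i + 1 < 2*K+1), yv_of_lt y (by omega : i + 2 < 2*K+1)]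
    rcases Nat.even_or_odd i with hev | hodd
    · have hW : W i - W (i+1) = y ⟨i+1, by omega⟩ * pY K ⟨i+1, by omega⟩ f y := by
        simp only [W]
        rw [dif_pos ⟨hev, by omega⟩, dif_neg fun h => Nat.not_even_iff_odd.2 hev.add_one h.1,
          sub_zero]
      rw [hW, pY_lamY_of_odd y (c := ⟨i+1, _⟩) hev.add_one]
      linear_combination y ⟨i+1, by omega⟩ * pY K ⟨i+1, by omega⟩ f y *
        mul_pY_lamY_of_even y (c := ⟨i+2, by omega⟩) (hev.add even_two) (by simp)
    · have hW : W i - W (i+1) = - (y ⟨i+2, by omega⟩ * pY K ⟨i+2, by omega⟩ f y) := by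
        simp only [W]
        rw [dif_neg fun h => Nat.not_even_iff_odd.2 hodd h.1,
          dif_pos ⟨hodd.add_one, by omega⟩, zero_sub]
      rw [hW, pY_lamY_of_odd y (c := ⟨i+2, _⟩) (hodd.add_even even_two)]
      linear_combination -(y ⟨i+2, by omega⟩ * pY K ⟨i+2, by omega⟩ f y) *
        mul_pY_lamY_of_even y (c := ⟨i+1, by omega⟩) hodd.add_one (by simp)
  have hW0 : W 0 = y 1 * pY K 1 f y := by
    have h1 : (⟨1, by omega⟩ : Fin (2*K+1)) = 1 := Fin.ext (Nat.mod_eq_of_lt (by omega)).symm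
    simp only [W]
    rw [dif_pos ⟨Even.zero, by omega⟩]
    simp only [zero_add, h1]
  have hWlast : W (2*K-1) = 0 := dif_neg fun h =>
    Nat.not_even_iff_odd.2 (Nat.Even.sub_odd (by omega) (even_two_mul K) odd_one) h.1
  calc lcBr K f (lamY K) y = 1/4 * ∑ i ∈ range (2*K-1), 2 * lamY K y * (W i - W (i+1)) := by
        rw [lcBr, ← Fin.sum_univ_eq_sum_range (fun i => 2 * lamY K y * (W i - W (i+1)))]
        exact congrArg _ (sum_congr rfl fun i _ => hterm i i.isLt)
    _ = lamY K y / 2 * (y 1 * pY K 1 f y) := by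
        rw [← mul_sum, sum_range_sub', hW0, hWlast]; ring

theorem sY_of_even_of_le {j : ℕ} (heven : Even j) (hj1 : 2 ≤ j) (hj : j ≤ 2*K) (z : YV K) :
    sY K j z = (1 + yv K z j ^ 2) * ∏ i ∈ range j, yv K z (i+1) ^ ((-1:ℤ)^i * 2) := by
  rw [sY, if_neg (by omega), if_neg (by omega), if_neg (by omega),
    if_pos (Nat.even_iff.1 heven)]

theorem sY_two_mul_add_two (z : YV K) :
    sY K (2*K+2) z = yv K z 1 ^ 2 * nestList (List.ofFn fun k : Fin K => yv K z (2*k+2) ^ 2)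
      * ∏ j ∈ range K, yv K z (2*(j+1)) ^ (-4 : ℤ) := by
  rw [sY, if_neg (by omega), if_neg (by omega), if_pos rfl]

theorem sY_update_one_of_le {j : ℕ} (heven : Even j) (hj1 : 2 ≤ j) (hj : j ≤ 2*K)
    (y : YV K) (t : ℂ) :
    sY K j (update y 1 t)
      = t ^ 2 * ((1 + yv K y j ^ 2) * ∏ i ∈ range (j-1), yv K y (i+2) ^ ((-1:ℤ)^(i+1) * 2)) := by
  obtain ⟨n, rfl⟩ : ∃ n, j = n + 1 := ⟨j-1, by omega⟩
  rw [sY_of_even_of_le heven hj1 hj, prod_range_succ', yv_update_one_of_two_le y hj1 hj,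
    zero_add, yv_update_one_self, Nat.add_sub_cancel]
  rw [prod_congr rfl fun i hi => by
    rw [yv_update_one_of_two_le y (by omega) (by simp at hi; omega)]]
  simp only [pow_zero, one_mul]
  norm_cast
  ring

theorem sY_two_mul_add_two_update_one (y : YV K) (t : ℂ) :
    sY K (2*K+2) (update y 1 t)
      = t ^ 2 * (nestList (List.ofFn fun k : Fin K => yv K y (2*k+2) ^ 2)
          * ∏ j ∈ range K, yv K y (2*(j+1)) ^ (-4 : ℤ)) := by
  rw [sY_two_mul_add_two, yv_update_one_self, mul_assoc]
  congr 2
  · exact congrArg nestList (List.ofFn_inj.2 (funext fun k => by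
      rw [yv_update_one_of_two_le y (by omega) (by omega)]))
  · exact prod_congr rfl fun k hk => by
      rw [yv_update_one_of_two_le y (by omega) (by simp at hk; omega)]

theorem differentiableAt_sY {y : YV K} (hy : ∀ i : Fin (2*K+1), (i:ℕ) ≠ 0 → y i ≠ 0)
    {j : ℕ} (heven : Even j) (hj1 : 2 ≤ j) (hj : j ≤ 2*K+2) :
    DifferentiableAt ℂ (sY K j) y := by
  rcases hj.lt_or_eq with hlt | rfl
  · have hj' : j ≤ 2*K := by grind
    rw [funext (sY_of_even_of_le heven hj1 hj')]
    fun_prop (disch := exact .inl (yv_ne_zero hy (by omega) (by simp only [mem_range] at *; omega)))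
  · rw [funext sY_two_mul_add_two]
    have := differentiableAt_nestList_ofFn (x := y)
      fun k : Fin K => (differentiable_yv (K := K) (2*k+2) y).pow 2
    fun_prop (disch := exact .inl (yv_ne_zero hy (by omega) (by simp only [mem_range] at *; omega)))

theorem mul_pY_one_sY_of_even {y : YV K} (hy : ∀ i : Fin (2*K+1), (i:ℕ) ≠ 0 → y i ≠ 0)
    {j : ℕ} (heven : Even j) (hj1 : 2 ≤ j) (hj : j ≤ 2*K+2) :
    y 1 * pY K 1 (sY K j) y = 2 * sY K j y := by
  obtain ⟨g, hg⟩ : ∃ g, ∀ t, sY K j (update y 1 t) = t ^ 2 * g := by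
    rcases hj.lt_or_eq with hlt | rfl
    · exact ⟨_, sY_update_one_of_le heven hj1 (by grind) y⟩
    · exact ⟨_, sY_two_mul_add_two_update_one y⟩
  exact_mod_cast mul_fderiv_single_eq_of_update_eq_pow_mul (differentiableAt_sY hy heven hj1 hj) hg

end ClusterCoordinates

/-- for every even index `j` with `2 ≤ j ≤ 2K+2`,
`{s_j, λ}_y = s_j λ`, identically on `(ℂ*)^{2K}`. -/
theorem cluster_bracket_sEven_lambda (K : ℕ) (hK : 1 ≤ K) (y : YV K)
    (hy : ∀ i : Fin (2*K+1), (i:ℕ) ≠ 0 → y i ≠ 0)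
    (j : ℕ) (heven : Even j) (hj1 : 2 ≤ j) (hj : j ≤ 2*K+2) :
    lcBr K (sY K j) (lamY K) y = sY K j y * lamY K y := by
  rw [ClusterCoordinates.lcBr_lamY hK, ClusterCoordinates.mul_pY_one_sY_of_even hy heven hj1 hj]
  ring
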